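/- Let P be an a.e. positive and a.e. symmetric measurable probability density on Λ^N, and let W be a measurable, a.e. finite, a.e. symmetric function on Λ^N. Suppose U ∈ V_P satisfies F_P(V) ≤ F_P(U) for every V ∈ V_P. Then ρ_U^(m) = ρ^(m) a.e. on Λ^m. -/

import Mathlib

open MeasureTheory Real Filter
open scoped ENNReal

noncomputable section

variable {Λ : Type*} [MeasurableSpace Λ]

/-- The product measure on `Λ^k` (the `k`-fold product of `μ`). -/
def pm (μ : Measure Λ) (k : ℕ) : Measure (Fin k → Λ) := Measure.pi fun _ => μ

/-- A function on `Λ^k` is symmetric if it is invariant under all permutations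
of its variables. -/
def IsSymm' {Λ : Type*} (k : ℕ) (f : (Fin k → Λ) → ℝ) : Prop :=
  ∀ σ : Equiv.Perm (Fin k), ∀ x, f (x ∘ σ) = f x

/-- The `m`-sum `Σ_{1 ≤ i₁ < ⋯ < i_m ≤ N} v(x_{i₁},…,x_{i_m})`. -/
def mSum {Λ : Type*} (N m : ℕ) (v : (Fin m → Λ) → ℝ) (x : Fin N → Λ) : ℝ :=
  ∑ s ∈ Finset.powersetCard m (Finset.univ : Finset (Fin N)),
    if h : s.card = m then v (fun i => x (s.orderEmbOfFin h i)) else 0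

/-- `V` has `m`-sum structure with (symmetric, measurable, real-valued) generator `v`. -/
def HasSumStruct (μ : Measure Λ) (N m : ℕ) (V : (Fin N → Λ) → ℝ)
    (v : (Fin m → Λ) → ℝ) : Prop :=
  IsSymm' m v ∧ Measurable v ∧ V =ᵐ[pm μ N] mSum N m v

/-- The measure `P d^N x`. -/
def Pmeas (μ : Measure Λ) (N : ℕ) (P : (Fin N → Λ) → ℝ) : Measure (Fin N → Λ) :=
  (pm μ N).withDensity fun x => ENNReal.ofReal (P x)

/-- The measure `e^{-W} d^N x`. -/
def Wmeas (μ : Measure Λ) (N : ℕ) (W : (Fin N → Λ) → ℝ) : Measure (Fin N → Λ) :=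
  (pm μ N).withDensity fun x => ENNReal.ofReal (Real.exp (-(W x)))

/-- The partition function `Z(V) = ∫ e^{-V-W} d^N x`, as an extended nonnegative real. -/
def ZE (μ : Measure Λ) (N : ℕ) (W V : (Fin N → Λ) → ℝ) : ℝ≥0∞ :=
  ∫⁻ x, ENNReal.ofReal (Real.exp (-(V x) - W x)) ∂(pm μ N)

/-- The partition function `Z(V)` as a real number. -/
def Zfun (μ : Measure Λ) (N : ℕ) (W V : (Fin N → Λ) → ℝ) : ℝ :=
  (ZE μ N W V).toReal

/-- The functional `F_P(V) = exp(-∫ V P d^N x) / Z(V)`. -/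
def FP (μ : Measure Λ) (N : ℕ) (P W V : (Fin N → Λ) → ℝ) : ℝ :=
  Real.exp (-∫ x, V x ∂(Pmeas μ N P)) / Zfun μ N W V

/-- Membership in the set `V_P`. -/
def memVP (μ : Measure Λ) (N m : ℕ) (P W V : (Fin N → Λ) → ℝ) : Prop :=
  Integrable V (Pmeas μ N P) ∧
  Integrable (fun x => Real.exp (-(V x))) (Wmeas μ N W) ∧
  ∃ v, HasSumStruct μ N m V v

/-- Gluing `(y, z) ∈ Λ^m × Λ^{N-m}` into a point of `Λ^N`. -/
def glue {Λ : Type*} {N m : ℕ} (h : m ≤ N) (y : Fin m → Λ) (z : Fin (N - m) → Λ) :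
    Fin N → Λ :=
  fun i => Fin.append y z (Fin.cast (by omega) i)

/-- The `m`-particle reduction `ρ^{(m)}` of `P`. -/
def rho (μ : Measure Λ) (N m : ℕ) (h : m ≤ N) (P : (Fin N → Λ) → ℝ)
    (y : Fin m → Λ) : ℝ :=
  ∫ z, P (glue h y z) ∂(pm μ (N - m))

/-- The measure `ρ^{(m)} d^m x`. -/
def rhomeas (μ : Measure Λ) (N m : ℕ) (h : m ≤ N) (P : (Fin N → Λ) → ℝ) :
    Measure (Fin m → Λ) :=
  (pm μ m).withDensity fun y => ENNReal.ofReal (rho μ N m h P y)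

/-- Membership in the set `V_{ρ^{(m)}}`. -/
def memVrho (μ : Measure Λ) (N m : ℕ) (h : m ≤ N) (P W V : (Fin N → Λ) → ℝ) : Prop :=
  Integrable (fun x => Real.exp (-(V x))) (Wmeas μ N W) ∧
  ∃ v, HasSumStruct μ N m V v ∧ Integrable v (rhomeas μ N m h P)

/-- The `m`-particle density `ρ_U^{(m)}` associated with the potential `U`. -/
def rhoU (μ : Measure Λ) (N m : ℕ) (h : m ≤ N) (W U : (Fin N → Λ) → ℝ)
    (y : Fin m → Λ) : ℝ :=
  (∫ z, Real.exp (-(W (glue h y z)) - U (glue h y z)) ∂(pm μ (N - m))) / Zfun μ N W U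


/-!
Perturb the maximiser `U` in a direction `t • Σ v`, with `v` bounded, measurable and symmetric.
The perturbed potential stays in `V_P`, and maximality of `t ↦ F_P(U + t Σ v)` at `t = 0` gives
the first-order condition `∫ (Σ v) e^{-U-W} = Z(U) ∫ (Σ v) P`. Since `P` and `e^{-U-W}` are
symmetric, each side collapses to `binom(N, m) ∫ v ρ` for the respective `m`-particle reduction,
so `∫ v (Z(U) ρ_U - ρ) = 0` for every such `v`. The difference is a.e. symmetric, so `v` may be
taken to be the sign of its symmetrisation, which forces `ρ_U = ρ` a.e.
-/

open Topology

namespace ManyBody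

instance (μ : Measure Λ) [SigmaFinite μ] (k : ℕ) : SigmaFinite (pm μ k) := by
  unfold pm; infer_instance

theorem integral_comp_perm (μ : Measure Λ) [SigmaFinite μ] {k : ℕ} (σ : Equiv.Perm (Fin k))
    (φ : (Fin k → Λ) → ℝ) : ∫ x, φ (x ∘ σ) ∂pm μ k = ∫ x, φ x ∂pm μ k :=
  (measurePreserving_arrowCongr' (fun _ => μ) (fun _ => μ) σ.symm (MeasurableEquiv.refl Λ)
    fun _ => MeasurePreserving.id μ).integral_comp' φ

theorem IsSymm'.apply_comp_eq_of_range_eq {Λ β : Type*} {k : ℕ} {v : (Fin k → Λ) → ℝ}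
    (hv : IsSymm' k v) (x : β → Λ) {f g : Fin k → β} (hf : f.Injective) (hg : g.Injective)
    (hfg : Set.range f = Set.range g) : v (x ∘ f) = v (x ∘ g) := by
  let e : Equiv.Perm (Fin k) := (Equiv.ofInjective g hg).trans
    ((Equiv.setCongr hfg.symm).trans (Equiv.ofInjective f hf).symm)
  have he : f ∘ e = g := funext fun i => by simp [e, Equiv.apply_ofInjective_symm hf]
  rw [← he, ← Function.comp_assoc, hv]

section SumStructure

variable {N m : ℕ}

theorem card_eq_of_mem_powersetCard {α : Type*} {s t : Finset α} {n : ℕ}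
    (hs : s ∈ t.powersetCard n) : s.card = n :=
  (Finset.mem_powersetCard.mp hs).2

theorem measurable_mSum {v : (Fin m → Λ) → ℝ} (hv : Measurable v) :
    Measurable (mSum N m v) := by
  refine Finset.measurable_sum _ fun s hs => ?_
  simp only [dif_pos (card_eq_of_mem_powersetCard hs)]
  exact hv.comp (by fun_prop)

theorem abs_mSum_le {Λ : Type*} {v : (Fin m → Λ) → ℝ} {C : ℝ} (hC : ∀ y, |v y| ≤ C)
    (x : Fin N → Λ) : |mSum N m v x| ≤ N.choose m * C := by
  refine (Finset.abs_sum_le_sum_abs _ _).trans ?_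
  refine (Finset.sum_le_card_nsmul _ _ C fun s hs => ?_).trans_eq (by simp)
  rw [dif_pos (card_eq_of_mem_powersetCard hs)]
  exact hC _

theorem integrable_mSum {ν : Measure (Fin N → Λ)} [IsFiniteMeasure ν] {v : (Fin m → Λ) → ℝ}
    (hv : Measurable v) {C : ℝ} (hC : ∀ y, |v y| ≤ C) : Integrable (mSum N m v) ν :=
  .of_bound (measurable_mSum hv).aestronglyMeasurable _ (Eventually.of_forall (abs_mSum_le hC))

theorem mSum_add_const_mul {Λ : Type*} (u v : (Fin m → Λ) → ℝ) (t : ℝ) (x : Fin N → Λ) :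
    mSum N m (fun y => u y + t * v y) x = mSum N m u x + t * mSum N m v x := by
  rw [mSum, mSum, mSum, Finset.mul_sum, ← Finset.sum_add_distrib]
  refine Finset.sum_congr rfl fun s hs => ?_
  simp only [dif_pos (card_eq_of_mem_powersetCard hs)]

theorem mSum_comp_perm {Λ : Type*} {v : (Fin m → Λ) → ℝ} (hv : IsSymm' m v)
    (σ : Equiv.Perm (Fin N)) (x : Fin N → Λ) : mSum N m v (x ∘ σ) = mSum N m v x := by
  refine Finset.sum_nbij' (·.map σ.toEmbedding) (·.map σ.symm.toEmbedding) (by simp) (by simp)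
    (fun s _ => by simp [Finset.map_map]) (fun s _ => by simp [Finset.map_map]) fun s hs => ?_
  have hs' : (s.map σ.toEmbedding).card = m := by simpa using card_eq_of_mem_powersetCard hs
  rw [dif_pos (card_eq_of_mem_powersetCard hs), dif_pos hs']
  refine IsSymm'.apply_comp_eq_of_range_eq hv x
    (σ.injective.comp (Finset.orderEmbOfFin _ _).injective) (Finset.orderEmbOfFin _ _).injective ?_
  rw [Set.range_comp' σ, Finset.range_orderEmbOfFin, Finset.range_orderEmbOfFin, Finset.coe_map]
  rfl

end SumStructure

section Gluing

variable {N m : ℕ} (h : m ≤ N)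

def glueEquiv : ((Fin m → Λ) × (Fin (N - m) → Λ)) ≃ᵐ (Fin N → Λ) :=
  (MeasurableEquiv.sumPiEquivProdPi fun _ => Λ).symm.trans <|
    (MeasurableEquiv.piCongrLeft _ finSumFinEquiv).trans <|
      MeasurableEquiv.arrowCongr' (finCongr (by omega)) (MeasurableEquiv.refl Λ)

theorem glueEquiv_apply (p : (Fin m → Λ) × (Fin (N - m) → Λ)) :
    glueEquiv h p = glue h p.1 p.2 := by
  funext i
  simp only [glueEquiv, MeasurableEquiv.trans_apply, MeasurableEquiv.arrowCongr',
    Equiv.arrowCongr', Equiv.arrowCongr, MeasurableEquiv.piCongrLeft, Equiv.piCongrLeft,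
    Equiv.symm_symm, Equiv.piCongrLeft'_symm, EquivLike.coe_coe, finCongr_symm,
    MeasurableEquiv.coe_mk, Equiv.coe_fn_mk, Function.comp_apply, finCongr_apply,
    Equiv.piCongrLeft'_apply, MeasurableEquiv.refl_apply, glue, Fin.append]
  generalize Fin.cast _ i = j
  cases j using Fin.addCases <;>
    simp [MeasurableEquiv.coe_sumPiEquivProdPi_symm, Equiv.sumPiEquivProdPi]

theorem glue_castLE {Λ : Type*} (y : Fin m → Λ) (z : Fin (N - m) → Λ) (i : Fin m) :
    glue h y z (Fin.castLE h i) = y i := by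
  simp [glue, show Fin.cast (by omega) (Fin.castLE h i) = Fin.castAdd (N - m) i from rfl]

theorem glue_comp_castLE {Λ : Type*} (y : Fin m → Λ) (z : Fin (N - m) → Λ) :
    glue h y z ∘ Fin.castLE h = y :=
  funext (glue_castLE h y z)

theorem glue_comp_perm {Λ : Type*} (τ : Equiv.Perm (Fin m)) (y : Fin m → Λ)
    (z : Fin (N - m) → Λ) :
    glue h (y ∘ τ) z = glue h y z ∘ τ.viaEmbedding (Fin.castLEEmb h) := by
  funext j
  by_cases hj : j ∈ Set.range (Fin.castLEEmb h)
  · obtain ⟨i, rfl⟩ := hj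
    rw [Function.comp_apply, Equiv.Perm.viaEmbedding_apply]
    simp [glue_castLE]
  · rw [Function.comp_apply, Equiv.Perm.viaEmbedding_apply_of_notMem _ _ _ hj]
    simp only [glue]
    generalize hk : Fin.cast _ j = k
    cases k using Fin.addCases with
    | left i => exact absurd ⟨i, by ext; simpa using congrArg Fin.val hk.symm⟩ hj
    | right i => simp

variable (μ : Measure Λ) [SigmaFinite μ]

theorem measurePreserving_glueEquiv :
    MeasurePreserving (glueEquiv h) ((pm μ m).prod (pm μ (N - m))) (pm μ N) := by
  unfold pm
  exact (measurePreserving_arrowCongr' (fun _ => μ) (fun _ => μ) _ (MeasurableEquiv.refl Λ)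
    fun _ => MeasurePreserving.id μ).comp <|
    (measurePreserving_piCongrLeft (fun _ => μ) finSumFinEquiv).comp <|
      measurePreserving_sumPiEquivProdPi_symm fun _ => μ

theorem comp_glueEquiv (F : (Fin N → Λ) → ℝ) :
    F ∘ glueEquiv h = fun p => F (glue h p.1 p.2) :=
  funext fun p => congrArg F (glueEquiv_apply h p)

variable {μ}

theorem integrable_comp_glue {F : (Fin N → Λ) → ℝ} (hF : Integrable F (pm μ N)) :
    Integrable (fun p : (Fin m → Λ) × (Fin (N - m) → Λ) => F (glue h p.1 p.2))
      ((pm μ m).prod (pm μ (N - m))) := by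
  rw [← comp_glueEquiv]
  exact ((measurePreserving_glueEquiv h μ).integrable_comp_emb
    (glueEquiv h).measurableEmbedding).mpr hF

theorem integral_eq_integral_rho {F : (Fin N → Λ) → ℝ} (hF : Integrable F (pm μ N)) :
    ∫ x, F x ∂pm μ N = ∫ y, rho μ N m h F y ∂pm μ m := by
  rw [← (measurePreserving_glueEquiv h μ).integral_comp', integral_prod _
    (by simpa [glueEquiv_apply] using integrable_comp_glue h hF)]
  simp [glueEquiv_apply, rho]

theorem integrable_rho {F : (Fin N → Λ) → ℝ} (hF : Integrable F (pm μ N)) :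
    Integrable (rho μ N m h F) (pm μ m) :=
  (integrable_comp_glue h hF).integral_prod_left

theorem measurable_rho {F : (Fin N → Λ) → ℝ} (hF : Measurable F) :
    Measurable (rho μ N m h F) := by
  have : StronglyMeasurable fun p : (Fin m → Λ) × (Fin (N - m) → Λ) => F (glue h p.1 p.2) := by
    rw [← comp_glueEquiv]
    exact (hF.comp (glueEquiv h).measurable).stronglyMeasurable
  exact this.integral_prod_right'.measurable

theorem ae_ae_glue {p : (Fin N → Λ) → Prop} (hp : ∀ᵐ x ∂pm μ N, p x) :
    ∀ᵐ y ∂pm μ m, ∀ᵐ z ∂pm μ (N - m), p (glue h y z) := by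
  refine Measure.ae_ae_of_ae_prod (p := fun q => p (glue h q.1 q.2)) ?_
  simpa [glueEquiv_apply] using (measurePreserving_glueEquiv h μ).quasiMeasurePreserving.ae hp

theorem rho_comp_perm_ae {F : (Fin N → Λ) → ℝ}
    (hF : ∀ σ : Equiv.Perm (Fin N), ∀ᵐ x ∂pm μ N, F (x ∘ σ) = F x) (τ : Equiv.Perm (Fin m)) :
    ∀ᵐ y ∂pm μ m, rho μ N m h F (y ∘ τ) = rho μ N m h F y := by
  filter_upwards [ae_ae_glue h (hF (τ.viaEmbedding (Fin.castLEEmb h)))] with y hy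
  refine integral_congr_ae ?_
  filter_upwards [hy] with z hz
  rw [glue_comp_perm, hz]

theorem integral_comp_injective_mul {v : (Fin m → Λ) → ℝ} {f : (Fin N → Λ) → ℝ}
    (hf : ∀ σ : Equiv.Perm (Fin N), ∀ᵐ x ∂pm μ N, f (x ∘ σ) = f x) {g : Fin m → Fin N}
    (hg : g.Injective) :
    ∫ x, v (x ∘ g) * f x ∂pm μ N = ∫ x, v (x ∘ Fin.castLE h) * f x ∂pm μ N := by
  obtain ⟨σ, hσ⟩ := Equiv.Perm.exists_extending_pair _ _ (Fin.castLE_injective h) hg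
  rw [← integral_comp_perm μ σ fun x => v (x ∘ Fin.castLE h) * f x]
  refine integral_congr_ae ?_
  filter_upwards [hf σ] with x hx
  rw [hx]
  simp only [Function.comp_def, hσ]

theorem integral_mSum_mul {v : (Fin m → Λ) → ℝ} (hv : Measurable v) {C : ℝ}
    (hC : ∀ y, |v y| ≤ C) {f : (Fin N → Λ) → ℝ} (hf : Integrable f (pm μ N))
    (hf_symm : ∀ σ : Equiv.Perm (Fin N), ∀ᵐ x ∂pm μ N, f (x ∘ σ) = f x) :
    ∫ x, mSum N m v x * f x ∂pm μ N = N.choose m * ∫ y, v y * rho μ N m h f y ∂pm μ m := by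
  have hint (g : Fin m → Fin N) : Integrable (fun x => v (x ∘ g) * f x) (pm μ N) :=
    hf.bdd_mul (hv.comp (by fun_prop)).aestronglyMeasurable
      (Eventually.of_forall fun _ => (Real.norm_eq_abs _).trans_le (hC _))
  have hterm : ∀ s ∈ Finset.powersetCard m (Finset.univ : Finset (Fin N)),
      ∫ x, (if hs : s.card = m then v (fun i => x (s.orderEmbOfFin hs i)) else 0) * f x ∂pm μ N
        = ∫ x, v (x ∘ Fin.castLE h) * f x ∂pm μ N := fun s hs => by
    simp only [dif_pos (card_eq_of_mem_powersetCard hs)]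
    exact integral_comp_injective_mul h hf_symm (Finset.orderEmbOfFin _ _).injective
  simp only [mSum, Finset.sum_mul]
  rw [integral_finsetSum _ fun s hs => ?_, Finset.sum_congr rfl hterm]
  · simp only [Finset.sum_const, Finset.card_powersetCard, Finset.card_univ, Fintype.card_fin,
      nsmul_eq_mul]
    rw [integral_eq_integral_rho h (hint _)]
    simp only [rho, glue_comp_castLE, integral_const_mul]
  · simp only [dif_pos (card_eq_of_mem_powersetCard hs)]
    exact hint _

end Gluing

section SignTest

variable {k : ℕ}

def symmetrize {Λ : Type*} (f : (Fin k → Λ) → ℝ) (y : Fin k → Λ) : ℝ :=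
  ∑ τ : Equiv.Perm (Fin k), f (y ∘ τ)

theorem isSymm'_symmetrize {Λ : Type*} (f : (Fin k → Λ) → ℝ) : IsSymm' k (symmetrize f) :=
  fun σ _ => Fintype.sum_equiv (Equiv.mulLeft σ) _ _ fun _ => rfl

theorem symmetrize_eq_card_mul {Λ : Type*} {f : (Fin k → Λ) → ℝ} {y : Fin k → Λ}
    (hy : ∀ τ : Equiv.Perm (Fin k), f (y ∘ τ) = f y) :
    symmetrize f y = Fintype.card (Equiv.Perm (Fin k)) * f y := by
  simp [symmetrize, hy]

theorem measurable_symmetrize {f : (Fin k → Λ) → ℝ} (hf : Measurable f) :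
    Measurable (symmetrize f) :=
  Finset.measurable_sum _ fun _ _ => hf.comp (by fun_prop)

theorem ae_eq_zero_of_forall_isSymm'_integral_mul_eq_zero {ν : Measure (Fin k → Λ)}
    {D : (Fin k → Λ) → ℝ} (hD : Measurable D) (hD_int : Integrable D ν)
    (hD_symm : ∀ τ : Equiv.Perm (Fin k), ∀ᵐ y ∂ν, D (y ∘ τ) = D y)
    (h : ∀ v, Measurable v → IsSymm' k v → (∀ y, |v y| ≤ 1) → ∫ y, v y * D y ∂ν = 0) :
    D =ᵐ[ν] 0 := by
  set v : (Fin k → Λ) → ℝ := fun y => if 0 ≤ symmetrize D y then 1 else -1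
  have hv_mul : ∀ᵐ y ∂ν, v y * D y = |D y| := by
    filter_upwards [ae_all_iff.mpr hD_symm] with y hy
    have hsign : 0 ≤ symmetrize D y ↔ 0 ≤ D y := by
      rw [symmetrize_eq_card_mul hy]
      exact mul_nonneg_iff_of_pos_left (by exact_mod_cast Fintype.card_pos)
    by_cases hDy : 0 ≤ D y
    · simp [v, hsign.mpr hDy, abs_of_nonneg hDy]
    · simp [v, hsign, hDy, abs_of_neg (not_le.mp hDy)]
  have hv : Measurable v :=
    Measurable.ite (measurableSet_le measurable_const (measurable_symmetrize hD))
      measurable_const measurable_const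
  have hv_symm : IsSymm' k v := fun σ y => by simp only [v, isSymm'_symmetrize D σ y]
  have hv_le : ∀ y, |v y| ≤ 1 := fun y => by simp only [v]; split_ifs <;> simp
  have h_abs : ∫ y, |D y| ∂ν = 0 := by
    rw [← integral_congr_ae hv_mul]
    exact h v hv hv_symm hv_le
  filter_upwards [(integral_eq_zero_iff_of_nonneg (fun _ => abs_nonneg _) hD_int.abs).mp h_abs]
    with y hy
  exact abs_eq_zero.mp hy

end SignTest

theorem rho_ae_eq_of_forall_integral_mSum_mul_eq {μ : Measure Λ} [SigmaFinite μ] {N m : ℕ}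
    (h : m ≤ N) {F H : (Fin N → Λ) → ℝ}
    (hF : Integrable F (pm μ N)) (hF_meas : Measurable F)
    (hF_symm : ∀ σ : Equiv.Perm (Fin N), ∀ᵐ x ∂pm μ N, F (x ∘ σ) = F x)
    (hH : Integrable H (pm μ N)) (hH_meas : Measurable H)
    (hH_symm : ∀ σ : Equiv.Perm (Fin N), ∀ᵐ x ∂pm μ N, H (x ∘ σ) = H x)
    (hFH : ∀ v, Measurable v → IsSymm' m v → (∀ y, |v y| ≤ 1) →
      ∫ x, mSum N m v x * F x ∂pm μ N = ∫ x, mSum N m v x * H x ∂pm μ N) :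
    rho μ N m h F =ᵐ[pm μ m] rho μ N m h H := by
  refine (ae_eq_zero_of_forall_isSymm'_integral_mul_eq_zero
    ((measurable_rho h hF_meas).sub (measurable_rho h hH_meas))
    ((integrable_rho h hF).sub (integrable_rho h hH)) (fun τ => ?_) fun v hv hv_symm hv_le => ?_
    ).mono fun y hy => sub_eq_zero.mp hy
  · filter_upwards [rho_comp_perm_ae h hF_symm τ, rho_comp_perm_ae h hH_symm τ] with y hyF hyH
    simp [hyF, hyH]
  · have hv_bdd (G : (Fin N → Λ) → ℝ) (hG : Integrable G (pm μ N)) :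
        Integrable (fun y => v y * rho μ N m h G y) (pm μ m) :=
      (integrable_rho h hG).bdd_mul hv.aestronglyMeasurable
        (Eventually.of_forall fun y => (Real.norm_eq_abs _).trans_le (hv_le y))
    have hchoose : (N.choose m : ℝ) ≠ 0 := by exact_mod_cast (Nat.choose_pos h).ne'
    have := hFH v hv hv_symm hv_le
    rw [integral_mSum_mul h hv hv_le hF hF_symm, integral_mSum_mul h hv hv_le hH hH_symm] at this
    simp only [Pi.sub_apply, mul_sub]
    rw [integral_sub (hv_bdd F hF) (hv_bdd H hH), mul_left_cancel₀ hchoose this, sub_self]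


section FirstOrderCondition

variable {α : Type*} [MeasurableSpace α] {ν : Measure α} {B G : α → ℝ} {C : ℝ}

theorem integral_exp_neg_mul_le (hB : AEStronglyMeasurable B ν) (hBC : ∀ x, |B x| ≤ C)
    (hG : Integrable G ν) (hG0 : ∀ x, 0 ≤ G x) {t : ℝ} (ht : |t| * C ≤ 1) :
    ∫ x, exp (-(t * B x)) * G x ∂ν
      ≤ ∫ x, G x ∂ν - t * ∫ x, B x * G x ∂ν + t ^ 2 * ∫ x, B x ^ 2 * G x ∂ν := by
  have hsmall (x : α) : |-(t * B x)| ≤ 1 := by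
    rw [abs_neg, abs_mul]
    exact (mul_le_mul_of_nonneg_left (hBC x) (abs_nonneg t)).trans ht
  have hBG : Integrable (fun x => B x * G x) ν :=
    hG.bdd_mul hB (Eventually.of_forall fun x => (Real.norm_eq_abs _).trans_le (hBC x))
  have hB2G : Integrable (fun x => B x ^ 2 * G x) ν :=
    hG.bdd_mul (hB.pow 2) (c := C ^ 2) (Eventually.of_forall fun x => by
      rw [Real.norm_eq_abs, abs_pow]
      exact pow_le_pow_left₀ (abs_nonneg _) (hBC x) 2)
  have hexpG : Integrable (fun x => exp (-(t * B x)) * G x) ν :=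
    hG.bdd_mul (continuous_exp.comp_aestronglyMeasurable (hB.const_mul t).neg) (c := exp 1)
      (Eventually.of_forall fun x => by
      rw [Real.norm_eq_abs, Real.abs_exp]
      exact exp_le_exp.mpr ((le_abs_self _).trans (hsmall x)))
  calc ∫ x, exp (-(t * B x)) * G x ∂ν
      ≤ ∫ x, (G x - t * (B x * G x) + t ^ 2 * (B x ^ 2 * G x)) ∂ν := by
        refine integral_mono hexpG ((hG.sub (hBG.const_mul t)).add (hB2G.const_mul _)) fun x => ?_
        have hexp := (abs_le.mp (Real.abs_exp_sub_one_sub_id_le (hsmall x))).2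
        calc exp (-(t * B x)) * G x ≤ (1 + -(t * B x) + (-(t * B x)) ^ 2) * G x :=
              mul_le_mul_of_nonneg_right (by linarith) (hG0 x)
          _ = _ := by ring
    _ = _ := by
        have hlin : Integrable (fun x => G x - t * (B x * G x)) ν := hG.sub (hBG.const_mul t)
        rw [integral_add hlin (hB2G.const_mul _), integral_sub hG (hBG.const_mul t),
          integral_const_mul, integral_const_mul]

theorem integral_mul_eq_of_forall_exp_le (hB : AEStronglyMeasurable B ν) (hBC : ∀ x, |B x| ≤ C)
    (hG : Integrable G ν) (hG0 : ∀ x, 0 ≤ G x) {b : ℝ}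
    (h : ∀ t : ℝ, exp (-(t * b)) * ∫ x, G x ∂ν ≤ ∫ x, exp (-(t * B x)) * G x ∂ν) :
    ∫ x, B x * G x ∂ν = b * ∫ x, G x ∂ν := by
  set z := ∫ x, G x ∂ν
  set c := ∫ x, B x * G x ∂ν
  set q := ∫ x, B x ^ 2 * G x ∂ν
  -- `g ≥ 0` near `0` by `h` and `integral_exp_neg_mul_le`, and `g 0 = 0`
  set g : ℝ → ℝ := fun t => z - t * c + t ^ 2 * q - exp (-(t * b)) * z
  have hmin : IsLocalMin g 0 := by
    have hcont : Tendsto (fun t : ℝ => |t| * C) (𝓝 0) (𝓝 0) :=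
      Continuous.tendsto' (by fun_prop) 0 0 (by simp)
    have hsmall : ∀ᶠ t in 𝓝 (0 : ℝ), |t| * C < 1 := hcont.eventually_lt_const one_pos
    filter_upwards [hsmall] with t ht
    have := integral_exp_neg_mul_le hB hBC hG hG0 ht.le
    simp only [g, zero_mul, neg_zero, exp_zero, one_mul, ne_eq, OfNat.ofNat_ne_zero,
      not_false_eq_true, zero_pow, sub_zero]
    linarith [h t]
  have hderiv : HasDerivAt g (-c + b * z) 0 := by
    have := (((hasDerivAt_const (0 : ℝ) z).sub ((hasDerivAt_id 0).mul_const c)).add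
      ((hasDerivAt_pow 2 0).mul_const q)).sub (((hasDerivAt_id 0).mul_const b).neg.exp.mul_const z)
    exact this.congr_deriv (by simp)
  linarith [hmin.hasDerivAt_eq_zero hderiv]

end FirstOrderCondition


section Functional

variable {μ : Measure Λ} {N m : ℕ} {P W : (Fin N → Λ) → ℝ}

theorem isProbabilityMeasure_Pmeas (hP : ∫⁻ x, ENNReal.ofReal (P x) ∂pm μ N = 1) :
    IsProbabilityMeasure (Pmeas μ N P) :=
  ⟨by rw [Pmeas, withDensity_apply _ MeasurableSet.univ, setLIntegral_univ, hP]⟩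

theorem integral_Pmeas (hP : Measurable P) (hP0 : 0 ≤ᵐ[pm μ N] P) (g : (Fin N → Λ) → ℝ) :
    ∫ x, g x ∂Pmeas μ N P = ∫ x, g x * P x ∂pm μ N := by
  rw [Pmeas, integral_withDensity_eq_integral_toReal_smul hP.ennreal_ofReal
    (Eventually.of_forall fun _ => ENNReal.ofReal_lt_top)]
  refine integral_congr_ae ?_
  filter_upwards [hP0] with x hx
  rw [ENNReal.toReal_ofReal hx, smul_eq_mul, mul_comm]

theorem HasSumStruct.add_const_mul {U : (Fin N → Λ) → ℝ} {u v : (Fin m → Λ) → ℝ}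
    (hu : HasSumStruct μ N m U u) (hv : Measurable v) (hv_symm : IsSymm' m v) (t : ℝ) :
    HasSumStruct μ N m (fun x => U x + t * mSum N m v x) (fun y => u y + t * v y) := by
  obtain ⟨hu_symm, hu_meas, hU⟩ := hu
  refine ⟨fun σ y => by simp only [hu_symm σ y, hv_symm σ y], hu_meas.add (hv.const_mul t), ?_⟩
  filter_upwards [hU] with x hx
  rw [hx, mSum_add_const_mul]

theorem Zfun_eq_integral {V : (Fin N → Λ) → ℝ} {v : (Fin m → Λ) → ℝ}
    (hV : HasSumStruct μ N m V v) (hW : Measurable W) :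
    Zfun μ N W V = ∫ x, exp (-mSum N m v x - W x) ∂pm μ N := by
  rw [integral_eq_lintegral_of_nonneg_ae (f := fun x => exp (-mSum N m v x - W x))
    (Eventually.of_forall fun _ => (exp_pos _).le)
    ((measurable_mSum hV.2.1).neg.sub hW).exp.aestronglyMeasurable, Zfun, ZE]
  congr 1
  exact lintegral_congr_ae (hV.2.2.mono fun x hx => by simp only [hx])

theorem integrable_exp_neg_mSum_sub {V : (Fin N → Λ) → ℝ} {v : (Fin m → Λ) → ℝ}
    (hV_exp : Integrable (fun x => exp (-V x)) (Wmeas μ N W)) (hV : HasSumStruct μ N m V v)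
    (hW : Measurable W) : Integrable (fun x => exp (-mSum N m v x - W x)) (pm μ N) := by
  rw [Wmeas, integrable_withDensity_iff (by fun_prop)
    (Eventually.of_forall fun _ => ENNReal.ofReal_lt_top)] at hV_exp
  refine hV_exp.congr (hV.2.2.mono fun x hx => ?_)
  simp only [ENNReal.toReal_ofReal (exp_pos _).le, ← exp_add, hx, sub_eq_add_neg]

theorem Zfun_pos [NeZero (pm μ N)] {V : (Fin N → Λ) → ℝ} (hV : memVP μ N m P W V)
    (hW : Measurable W) : 0 < Zfun μ N W V := by
  obtain ⟨-, hV_exp, v, hv⟩ := hV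
  rw [Zfun_eq_integral hv hW]
  exact integral_exp_pos (integrable_exp_neg_mSum_sub hV_exp hv hW)

theorem memVP_add_const_mul [IsFiniteMeasure (Pmeas μ N P)] {U : (Fin N → Λ) → ℝ}
    (hU : memVP μ N m P W U) {v : (Fin m → Λ) → ℝ} (hv : Measurable v) (hv_symm : IsSymm' m v)
    {C : ℝ} (hC : ∀ y, |v y| ≤ C) (t : ℝ) :
    memVP μ N m P W (fun x => U x + t * mSum N m v x) := by
  obtain ⟨hU_int, hU_exp, u, hu⟩ := hU
  refine ⟨hU_int.add ((integrable_mSum hv hC).const_mul t), ?_, _,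
    HasSumStruct.add_const_mul hu hv hv_symm t⟩
  have hexp : Integrable (fun x => exp (-(t * mSum N m v x)) * exp (-U x)) (Wmeas μ N W) :=
    hU_exp.bdd_mul (c := exp (|t| * (N.choose m * C)))
      (continuous_exp.comp_aestronglyMeasurable
        ((measurable_mSum hv).aestronglyMeasurable.const_mul t).neg)
      (Eventually.of_forall fun x => by
        rw [Real.norm_eq_abs, Real.abs_exp, exp_le_exp]
        exact (neg_le_abs _).trans ((abs_mul _ _).trans_le
          (mul_le_mul_of_nonneg_left (abs_mSum_le hC x) (abs_nonneg t))))
  exact hexp.congr (Eventually.of_forall fun x => by simp only [← exp_add]; ring_nf)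

theorem exp_neg_mul_Zfun_le_of_FP_le {U B : (Fin N → Λ) → ℝ} {t : ℝ}
    (hU : Integrable U (Pmeas μ N P)) (hB : Integrable B (Pmeas μ N P))
    (hZU : 0 < Zfun μ N W U) (hZ : 0 < Zfun μ N W fun x => U x + t * B x)
    (h : FP μ N P W (fun x => U x + t * B x) ≤ FP μ N P W U) :
    exp (-(t * ∫ x, B x ∂Pmeas μ N P)) * Zfun μ N W U ≤ Zfun μ N W fun x => U x + t * B x := by
  rw [FP, FP, integral_add hU (hB.const_mul t), integral_const_mul, div_le_div_iff₀ hZ hZU,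
    neg_add, exp_add, mul_assoc] at h
  exact le_of_mul_le_mul_left h (exp_pos _)

theorem integral_mSum_mul_exp_eq_of_isMax [IsFiniteMeasure (Pmeas μ N P)] [NeZero (pm μ N)]
    {U : (Fin N → Λ) → ℝ} {u : (Fin m → Λ) → ℝ} (hW : Measurable W) (hU : memVP μ N m P W U)
    (hu : HasSumStruct μ N m U u)
    (hU_max : ∀ V, memVP μ N m P W V → FP μ N P W V ≤ FP μ N P W U)
    {v : (Fin m → Λ) → ℝ} (hv : Measurable v) (hv_symm : IsSymm' m v) {C : ℝ}
    (hC : ∀ y, |v y| ≤ C) :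
    ∫ x, mSum N m v x * exp (-mSum N m u x - W x) ∂pm μ N
      = (∫ x, mSum N m v x ∂Pmeas μ N P) * ∫ x, exp (-mSum N m u x - W x) ∂pm μ N := by
  refine integral_mul_eq_of_forall_exp_le (measurable_mSum hv).aestronglyMeasurable
    (abs_mSum_le hC) (integrable_exp_neg_mSum_sub hU.2.1 hu hW) (fun _ => (exp_pos _).le)
    fun t => ?_
  have hV := memVP_add_const_mul hU hv hv_symm hC t
  have := exp_neg_mul_Zfun_le_of_FP_le hU.1 (integrable_mSum hv hC) (Zfun_pos hU hW)
    (Zfun_pos hV hW) (hU_max _ hV)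
  rw [Zfun_eq_integral hu hW, Zfun_eq_integral (HasSumStruct.add_const_mul hu hv hv_symm t) hW]
    at this
  convert this using 2
  funext x
  rw [mSum_add_const_mul, ← exp_add]
  ring_nf

theorem rhoU_ae_eq_rho_div [SigmaFinite μ] (h : m ≤ N) {U : (Fin N → Λ) → ℝ}
    {u : (Fin m → Λ) → ℝ} (hu : HasSumStruct μ N m U u) :
    rhoU μ N m h W U =ᵐ[pm μ m]
      fun y => rho μ N m h (fun x => exp (-mSum N m u x - W x)) y / Zfun μ N W U := by
  filter_upwards [ae_ae_glue h hu.2.2] with y hy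
  refine congrArg (· / Zfun μ N W U) (integral_congr_ae (hy.mono fun z hz => ?_))
  simp only [hz, sub_eq_add_neg, add_comm]

theorem rho_exp_ae_eq_of_isMax [SigmaFinite μ] [IsFiniteMeasure (Pmeas μ N P)]
    [NeZero (pm μ N)] (h : m ≤ N) (hP : Measurable P) (hP0 : 0 ≤ᵐ[pm μ N] P)
    (hP_int : Integrable P (pm μ N))
    (hP_symm : ∀ σ : Equiv.Perm (Fin N), ∀ᵐ x ∂pm μ N, P (x ∘ σ) = P x) (hW : Measurable W)
    (hW_symm : ∀ σ : Equiv.Perm (Fin N), ∀ᵐ x ∂pm μ N, W (x ∘ σ) = W x)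
    {U : (Fin N → Λ) → ℝ} {u : (Fin m → Λ) → ℝ} (hU : memVP μ N m P W U)
    (hu : HasSumStruct μ N m U u)
    (hU_max : ∀ V, memVP μ N m P W V → FP μ N P W V ≤ FP μ N P W U) :
    rho μ N m h (fun x => exp (-mSum N m u x - W x)) =ᵐ[pm μ m]
      rho μ N m h fun x => Zfun μ N W U * P x := by
  refine rho_ae_eq_of_forall_integral_mSum_mul_eq h (integrable_exp_neg_mSum_sub hU.2.1 hu hW)
    ((measurable_mSum hu.2.1).neg.sub hW).exp (fun σ => ?_) (hP_int.const_mul _)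
    (hP.const_mul _) (fun σ => (hP_symm σ).mono fun x hx => by rw [hx])
    fun v hv hv_symm hv_le => ?_
  · filter_upwards [hW_symm σ] with x hx
    simp only [hx, mSum_comp_perm hu.1]
  · rw [integral_mSum_mul_exp_eq_of_isMax hW hU hu hU_max hv hv_symm hv_le,
      integral_Pmeas hP hP0, ← Zfun_eq_integral hu hW, mul_comm, ← integral_const_mul]
    simp only [mul_left_comm]

end Functional

end ManyBody

open ManyBody

theorem statement11_general (μ : Measure Λ) [SigmaFinite μ]
    (N m : ℕ) (hmN : m ≤ N)
    (P W : (Fin N → Λ) → ℝ) (hPmeas : Measurable P)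
    (hPprob : ∫⁻ x, ENNReal.ofReal (P x) ∂(pm μ N) = 1)
    (hPpos : ∀ᵐ x ∂(pm μ N), 0 < P x)
    (hPsymm : ∀ σ : Equiv.Perm (Fin N), ∀ᵐ x ∂(pm μ N), P (x ∘ σ) = P x)
    (hWmeas : Measurable W)
    (hWsymm : ∀ σ : Equiv.Perm (Fin N), ∀ᵐ x ∂(pm μ N), W (x ∘ σ) = W x)
    (U : (Fin N → Λ) → ℝ) (hU : memVP μ N m P W U)
    (hUmax : ∀ V, memVP μ N m P W V → FP μ N P W V ≤ FP μ N P W U) :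
    rhoU μ N m hmN W U =ᵐ[pm μ m] rho μ N m hmN P := by
  have := isProbabilityMeasure_Pmeas hPprob
  have : NeZero (pm μ N) := ⟨fun h => by simp [h] at hPprob⟩
  obtain ⟨u, hu⟩ := hU.2.2
  have hP0 : 0 ≤ᵐ[pm μ N] P := hPpos.mono fun _ hx => hx.le
  have hP : Integrable P (pm μ N) :=
    (lintegral_ofReal_ne_top_iff_integrable hPmeas.aestronglyMeasurable hP0).mp (by simp [hPprob])
  filter_upwards [rhoU_ae_eq_rho_div hmN hu,
    rho_exp_ae_eq_of_isMax hmN hPmeas hP0 hP hPsymm hWmeas hWsymm hU hu hUmax] with y hyU hy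
  rw [hyU, hy, rho, rho, integral_const_mul, mul_div_cancel_left₀ _ (Zfun_pos hU hWmeas).ne']

/-- If `P` is an a.e. positive, a.e. symmetric probability density,
`W` is measurable, a.e. finite and a.e. symmetric, and `U ∈ V_P` maximizes `F_P`
over `V_P`, then `ρ_U^{(m)} = ρ^{(m)}` a.e. on `Λ^m`. -/
theorem statement11 (μ : Measure Λ) [SigmaFinite μ] (hμ : μ ≠ 0)
    (N m : ℕ) (hN : 2 ≤ N) (hm : 1 ≤ m) (hmN : m ≤ N)
    (P W : (Fin N → Λ) → ℝ) (hPmeas : Measurable P)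
    (hPprob : ∫⁻ x, ENNReal.ofReal (P x) ∂(pm μ N) = 1)
    (hPpos : ∀ᵐ x ∂(pm μ N), 0 < P x)
    (hPsymm : ∀ σ : Equiv.Perm (Fin N), ∀ᵐ x ∂(pm μ N), P (x ∘ σ) = P x)
    (hWmeas : Measurable W)
    (hWsymm : ∀ σ : Equiv.Perm (Fin N), ∀ᵐ x ∂(pm μ N), W (x ∘ σ) = W x)
    (U : (Fin N → Λ) → ℝ) (hU : memVP μ N m P W U)
    (hUmax : ∀ V, memVP μ N m P W V → FP μ N P W V ≤ FP μ N P W U) :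
    rhoU μ N m hmN W U =ᵐ[pm μ m] rho μ N m hmN P :=
  statement11_general μ N m hmN P W hPmeas hPprob hPpos hPsymm hWmeas hWsymm U hU hUmax

end
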